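/- arXiv:1502.03756 — 5 statements merged into one kernel-verified Lean document; each statement's English description precedes it below -/
import Mathlib

section
/- Local partition of unity: for every knot vector ξ, every degree p, every index j with j ≥ p, and every real number x with ξ j ≤ x < ξ (j+1), one has ∑_{i = j−p}^{j} N i p x = 1. -/
/-- Cox–de Boor B-spline basis functions, with the convention that any term whose
denominator vanishes is taken to be `0`. -/
noncomputable def bspline (ξ : ℕ → ℝ) : ℕ → ℕ → ℝ → ℝ
  | i, 0, x => if ξ i ≤ x ∧ x < ξ (i + 1) then 1 else 0
  | i, p + 1, x =>
      (if ξ (i + p + 1) - ξ i = 0 then 0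
        else (x - ξ i) / (ξ (i + p + 1) - ξ i) * bspline ξ i p x) +
      (if ξ (i + p + 2) - ξ (i + 1) = 0 then 0
        else (ξ (i + p + 2) - x) / (ξ (i + p + 2) - ξ (i + 1)) * bspline ξ (i + 1) p x)

lemma bspline_support (ξ : ℕ → ℝ) (hξ : ∀ i, ξ i ≤ ξ (i + 1)) :
    ∀ p i (x : ℝ), ¬(ξ i ≤ x ∧ x < ξ (i + p + 1)) → bspline ξ i p x = 0 := by
  have hm : Monotone ξ := monotone_nat_of_le_succ hξ
  intro p
  induction p with
  | zero =>
    intro i x h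
    simp only [bspline]
    rw [if_neg]
    intro hc
    exact h ⟨hc.1, by simpa using hc.2⟩
  | succ p ih =>
    intro i x h
    push_neg at h
    have h1 : bspline ξ i p x = 0 := by
      apply ih
      rintro ⟨ha, hb⟩
      have := h ha
      have : ξ (i + (p + 1) + 1) ≤ ξ (i + p + 1) := le_trans this hb.le
      exact absurd (h ha) (not_le.mpr (lt_of_lt_of_le hb (hm (by omega))))
    have h2 : bspline ξ (i + 1) p x = 0 := by
      apply ih
      rintro ⟨ha, hb⟩
      have ha' : ξ i ≤ x := le_trans (hm (by omega)) ha
      have : x < ξ (i + (p + 1) + 1) := by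
        have : i + 1 + p + 1 = i + (p + 1) + 1 := by omega
        rwa [this] at hb
      exact absurd (h ha') (not_le.mpr this)
    simp only [bspline, h1, h2, mul_zero]
    split_ifs <;> ring

lemma bspline_key (ξ : ℕ → ℝ) (hξ : ∀ i, ξ i ≤ ξ (i + 1)) :
    ∀ p j, p ≤ j → ∀ x : ℝ, ξ j ≤ x → x < ξ (j + 1) →
      ∑ i ∈ Finset.Icc (j - p) j, bspline ξ i p x = 1 := by
  have hm : Monotone ξ := monotone_nat_of_le_succ hξ
  intro p
  induction p with
  | zero =>
    intro j _ x hx₁ hx₂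
    simp only [Nat.sub_zero, Finset.Icc_self, Finset.sum_singleton, bspline]
    exact if_pos ⟨hx₁, hx₂⟩
  | succ p ih =>
    intro j hj x hx₁ hx₂
    set k := j - (p + 1) with hk
    have hkj : k + 1 = j - p := by omega
    have hkj' : k + (p + 1) = j := by omega
    -- define the two summand families
    set A : ℕ → ℝ := fun i => if ξ (i + p + 1) - ξ i = 0 then 0
        else (x - ξ i) / (ξ (i + p + 1) - ξ i) * bspline ξ i p x with hA
    set C : ℕ → ℝ := fun i => if ξ (i + p + 1) - ξ i = 0 then 0
        else (ξ (i + p + 1) - x) / (ξ (i + p + 1) - ξ i) * bspline ξ i p x with hC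
    have hsplit : ∀ i, bspline ξ i (p + 1) x = A i + C (i + 1) := by
      intro i
      simp only [bspline, hA, hC]
      have e1 : i + 1 + p + 1 = i + p + 2 := by omega
      rw [e1]
    have hshift : ∑ i ∈ Finset.Icc k j, C (i + 1)
        = ∑ i ∈ Finset.Icc (k + 1) (j + 1), C i := by
      rw [← Finset.map_add_right_Icc k j 1]
      rw [Finset.sum_map]
      rfl
    have hsum : ∑ i ∈ Finset.Icc k j, bspline ξ i (p + 1) x
        = (∑ i ∈ Finset.Icc k j, A i) + ∑ i ∈ Finset.Icc (k + 1) (j + 1), C i := by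
      rw [← hshift, ← Finset.sum_add_distrib]
      exact Finset.sum_congr rfl fun i _ => hsplit i
    -- A k = 0 : bspline k p x = 0 since x ≥ ξ j = ξ (k + p + 1)
    have hAk : A k = 0 := by
      have : bspline ξ k p x = 0 := by
        apply bspline_support ξ hξ
        rintro ⟨-, hb⟩
        have : ξ (k + p + 1) ≤ x := le_trans (hm (by omega)) hx₁
        exact absurd hb (not_lt.mpr this)
      simp [hA, this]
    -- C (j+1) = 0 : bspline (j+1) p x = 0 since x < ξ (j+1)
    have hCj : C (j + 1) = 0 := by
      have : bspline ξ (j + 1) p x = 0 := by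
        apply bspline_support ξ hξ
        rintro ⟨ha, -⟩
        exact absurd ha (not_le.mpr hx₂)
      simp [hC, this]
    have hbot : ∑ i ∈ Finset.Icc k j, A i = ∑ i ∈ Finset.Icc (k + 1) j, A i := by
      rw [show Finset.Icc k j = (Finset.Ioc k j).cons k (by simp) from ?_]
      · rw [Finset.sum_cons, hAk, zero_add, Finset.Icc_add_one_left_eq_Ioc]
      · rw [Finset.cons_eq_insert, Finset.Ioc_insert_left (by omega)]
    have htop : ∑ i ∈ Finset.Icc (k + 1) (j + 1), C i
        = ∑ i ∈ Finset.Icc (k + 1) j, C i := by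
      rw [Finset.sum_Icc_succ_top (by omega), hCj, add_zero]
    have hAC : ∀ i, A i + C i = bspline ξ i p x := by
      intro i
      simp only [hA, hC]
      split_ifs with h
      · have : bspline ξ i p x = 0 := by
          apply bspline_support ξ hξ
          rintro ⟨ha, hb⟩
          have : ξ (i + p + 1) = ξ i := by linarith [sub_eq_zero.mp h]
          exact absurd (lt_of_le_of_lt ha hb) (by rw [this]; exact lt_irrefl _)
        simp [this]
      · field_simp
        ring
    rw [hsum, hbot, htop, ← Finset.sum_add_distrib]
    rw [Finset.sum_congr rfl fun i _ => hAC i]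
    rw [hkj]
    exact ih j (by omega) x hx₁ hx₂

/-- Local partition of unity: on the knot span `[ξ j, ξ (j+1))` with `j ≥ p`,
the degree-`p` B-spline basis functions `N_{j-p,p}, …, N_{j,p}` sum to `1`. -/
theorem bspline_partition_of_unity (ξ : ℕ → ℝ) (hξ : ∀ i, ξ i ≤ ξ (i + 1))
    (p j : ℕ) (hj : p ≤ j) (x : ℝ) (hx₁ : ξ j ≤ x) (hx₂ : x < ξ (j + 1)) :
    ∑ i ∈ Finset.Icc (j - p) j, bspline ξ i p x = 1 := by
  exact bspline_key ξ hξ p j hj x hx₁ hx₂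
end

section
/- Derivative recurrence for B-splines: let ξ be a knot vector, p ≥ 1 a degree, and x a real number lying in the interior of a knot span, i.e. ξ j < x < ξ (j+1) for some index j. Then for every index i the function N i p is differentiable at x with derivative (N i p)' x = (p/(ξ (i+p) − ξ i)) · N i (p−1) x − (p/(ξ (i+p+1) − ξ (i+1))) · N (i+1) (p−1) x, where any term whose denominator is zero is taken to be 0. -/
lemma bspline_zero_apply (ξ : ℕ → ℝ) (i : ℕ) (x : ℝ) :
    bspline ξ i 0 x = if ξ i ≤ x ∧ x < ξ (i + 1) then 1 else 0 := by
  rw [bspline]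

lemma bspline_succ_apply (ξ : ℕ → ℝ) (i p : ℕ) (x : ℝ) :
    bspline ξ i (p + 1) x =
      (if ξ (i + p + 1) - ξ i = 0 then 0
        else (x - ξ i) / (ξ (i + p + 1) - ξ i) * bspline ξ i p x) +
      (if ξ (i + p + 2) - ξ (i + 1) = 0 then 0
        else (ξ (i + p + 2) - x) / (ξ (i + p + 2) - ξ (i + 1)) * bspline ξ (i + 1) p x) := by
  rw [bspline]

noncomputable def bsplineDeriv (ξ : ℕ → ℝ) (p i : ℕ) (x : ℝ) : ℝ :=
  (if ξ (i + p) - ξ i = 0 then 0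
      else (p : ℝ) / (ξ (i + p) - ξ i) * bspline ξ i (p - 1) x) -
  (if ξ (i + p + 1) - ξ (i + 1) = 0 then 0
      else (p : ℝ) / (ξ (i + p + 1) - ξ (i + 1)) * bspline ξ (i + 1) (p - 1) x)

set_option maxHeartbeats 1000000 in
/-- Derivative recurrence for B-splines: at a point `x` interior to a knot span
(`ξ j < x < ξ (j+1)` for some `j`), the degree-`p ≥ 1` basis function `N_{i,p}` is
differentiable with derivative
`p/(ξ (i+p) − ξ i) · N_{i,p−1}(x) − p/(ξ (i+p+1) − ξ (i+1)) · N_{i+1,p−1}(x)`,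
where any term with vanishing denominator is taken to be `0`. -/
theorem bspline_hasDerivAt (ξ : ℕ → ℝ) (hξ : ∀ i, ξ i ≤ ξ (i + 1))
    (p : ℕ) (hp : 1 ≤ p) (j : ℕ) (x : ℝ) (hx₁ : ξ j < x) (hx₂ : x < ξ (j + 1))
    (i : ℕ) :
    HasDerivAt (bspline ξ i p)
      ((if ξ (i + p) - ξ i = 0 then 0
          else (p : ℝ) / (ξ (i + p) - ξ i) * bspline ξ i (p - 1) x) -
       (if ξ (i + p + 1) - ξ (i + 1) = 0 then 0
          else (p : ℝ) / (ξ (i + p + 1) - ξ (i + 1)) * bspline ξ (i + 1) (p - 1) x))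
      x := by
  have hmono : Monotone ξ := monotone_nat_of_le_succ hξ
  have hknot : ∀ k, x < ξ k ∨ ξ k < x := by
    intro k
    rcases le_or_gt k j with h | h
    · exact Or.inr (lt_of_le_of_lt (hmono h) hx₁)
    · exact Or.inl (lt_of_lt_of_le hx₂ (hmono h))
  have hev : ∀ k, bspline ξ k 0 =ᶠ[nhds x] fun _ => bspline ξ k 0 x := by
    intro k
    rcases hknot k with h1 | h1
    · filter_upwards [Iio_mem_nhds h1] with y hy
      have : ¬ ξ k ≤ y := not_le.2 hy
      simp [bspline_zero_apply, this, not_le.2 h1]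
    · rcases hknot (k + 1) with h2 | h2
      · filter_upwards [Ioi_mem_nhds h1, Iio_mem_nhds h2] with y hy1 hy2
        simp [bspline_zero_apply, le_of_lt (Set.mem_Ioi.mp hy1), Set.mem_Iio.mp hy2, le_of_lt h1, h2]
      · filter_upwards [Ioi_mem_nhds h2] with y hy
        have hny : ¬ y < ξ (k + 1) := not_lt.2 (le_of_lt hy)
        have hnx : ¬ x < ξ (k + 1) := not_lt.2 (le_of_lt h2)
        simp [bspline_zero_apply, hny, hnx]
  have key : ∀ q k, HasDerivAt (bspline ξ k q) (bsplineDeriv ξ q k x) x := by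
    intro q
    induction q with
    | zero =>
        intro k
        have h0 : bsplineDeriv ξ 0 k x = 0 := by
          simp [bsplineDeriv]
        rw [h0]
        exact (hasDerivAt_const x (bspline ξ k 0 x)).congr_of_eventuallyEq (hev k)
    | succ p ih =>
        intro k
        have hfe : bspline ξ k (p + 1) = fun y =>
            (if ξ (k + p + 1) - ξ k = 0 then 0
              else (y - ξ k) / (ξ (k + p + 1) - ξ k) * bspline ξ k p y) +
            (if ξ (k + p + 2) - ξ (k + 1) = 0 then 0
              else (ξ (k + p + 2) - y) / (ξ (k + p + 2) - ξ (k + 1)) * bspline ξ (k + 1) p y) :=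
          funext fun y => bspline_succ_apply ξ k p y
        have hD1 : HasDerivAt (fun y =>
            if ξ (k + p + 1) - ξ k = 0 then 0
              else (y - ξ k) / (ξ (k + p + 1) - ξ k) * bspline ξ k p y)
            (if ξ (k + p + 1) - ξ k = 0 then 0
              else 1 / (ξ (k + p + 1) - ξ k) * bspline ξ k p x +
                (x - ξ k) / (ξ (k + p + 1) - ξ k) * bsplineDeriv ξ p k x) x := by
          by_cases hd : ξ (k + p + 1) - ξ k = 0
          · simp only [if_pos hd]; exact hasDerivAt_const x 0
          · simp only [if_neg hd]
            exact (((hasDerivAt_id x).sub_const (ξ k)).div_const _).mul (ih k)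
        have hD2 : HasDerivAt (fun y =>
            if ξ (k + p + 2) - ξ (k + 1) = 0 then 0
              else (ξ (k + p + 2) - y) / (ξ (k + p + 2) - ξ (k + 1)) * bspline ξ (k + 1) p y)
            (if ξ (k + p + 2) - ξ (k + 1) = 0 then 0
              else (-1) / (ξ (k + p + 2) - ξ (k + 1)) * bspline ξ (k + 1) p x +
                (ξ (k + p + 2) - x) / (ξ (k + p + 2) - ξ (k + 1)) * bsplineDeriv ξ p (k + 1) x) x := by
          by_cases hd : ξ (k + p + 2) - ξ (k + 1) = 0
          · simp only [if_pos hd]; exact hasDerivAt_const x 0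
          · simp only [if_neg hd]
            exact ((((hasDerivAt_id x).const_sub (ξ (k + p + 2)))).div_const _).mul (ih (k + 1))
        rw [hfe]
        refine (hD1.add hD2).congr_deriv (Eq.symm ?_)

        obtain _ | q := p
        · -- degree 1 case
          simp only [bsplineDeriv]
          norm_num
          split_ifs <;> ring
        · -- degree q+2 case
          simp only [bsplineDeriv, Nat.add_sub_cancel, bspline_succ_apply]
          simp only [show k + (q+1) = k+q+1 by omega, show k + (q+1) + 1 = k+q+2 by omega,
            show k + (q+1) + 2 = k+q+3 by omega,
            show k + (q+1+1) = k+q+2 by omega, show k + (q+1+1) + 1 = k+q+3 by omega,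
            show k+1+q+1 = k+q+2 by omega, show k+1+q+2 = k+q+3 by omega,
            show k+1+(q+1) = k+q+2 by omega, show k+1+(q+1)+1 = k+q+3 by omega,
            show k+1+(q+1)+2 = k+q+4 by omega,
            show k+q+1+1 = k+q+2 by omega, show k+q+1+2 = k+q+3 by omega,
            show k+q+2+1 = k+q+3 by omega,
            show k+1+1 = k+2 by omega]
          push_cast
          by_cases hd1 : ξ (k+q+2) - ξ k = 0 <;> by_cases hd2 : ξ (k+q+3) - ξ (k+1) = 0
          · have he1 : ξ (k+q+1) - ξ k = 0 := by
              have a := hmono (show k ≤ k+q+1 by omega)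
              have b := hmono (show k+q+1 ≤ k+q+2 by omega); linarith
            have he2 : ξ (k+q+2) - ξ (k+1) = 0 := by
              have a := hmono (show k ≤ k+1 by omega)
              have b := hmono (show k+1 ≤ k+q+2 by omega); linarith
            have he3 : ξ (k+q+3) - ξ (k+2) = 0 := by
              have a := hmono (show k+1 ≤ k+2 by omega)
              have b := hmono (show k+2 ≤ k+q+3 by omega); linarith
            simp only [if_pos hd1, if_pos hd2, if_pos he1, if_pos he2, if_pos he3]
            norm_num
          · have he1 : ξ (k+q+1) - ξ k = 0 := by
              have a := hmono (show k ≤ k+q+1 by omega)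
              have b := hmono (show k+q+1 ≤ k+q+2 by omega); linarith
            have he2 : ξ (k+q+2) - ξ (k+1) = 0 := by
              have a := hmono (show k ≤ k+1 by omega)
              have b := hmono (show k+1 ≤ k+q+2 by omega); linarith
            simp only [if_pos hd1, if_neg hd2, if_pos he1, if_pos he2]
            split_ifs with h3
            · norm_num
            · field_simp [hd2, h3]
              ring
          · have he2 : ξ (k+q+2) - ξ (k+1) = 0 := by
              have a := hmono (show k+1 ≤ k+q+2 by omega)
              have b := hmono (show k+q+2 ≤ k+q+3 by omega); linarith
            have he3 : ξ (k+q+3) - ξ (k+2) = 0 := by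
              have a := hmono (show k+1 ≤ k+2 by omega)
              have b := hmono (show k+2 ≤ k+q+3 by omega); linarith
            simp only [if_neg hd1, if_pos hd2, if_pos he2, if_pos he3]
            split_ifs with h1
            · norm_num
            · field_simp [hd1, h1]
              ring
          · simp only [if_neg hd1, if_neg hd2]
            split_ifs <;>
              field_simp [hd1, hd2, *] <;> ring

  exact key p i
end

section
/- Piecewise-polynomial structure: for every knot vector ξ, every index i, every degree p, and every index j, there exists a real polynomial q of degree at most p such that N i p x = q(x) for all x in the knot span [ξ j, ξ (j+1)). -/
/-- Piecewise-polynomial structure: on every knot span `[ξ j, ξ (j+1))` the basis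
function `N_{i,p}` coincides with a real polynomial of degree at most `p`. -/
theorem bspline_piecewise_polynomial (ξ : ℕ → ℝ) (hξ : ∀ i, ξ i ≤ ξ (i + 1))
    (i p j : ℕ) :
    ∃ q : Polynomial ℝ, q.degree ≤ p ∧
      ∀ x ∈ Set.Ico (ξ j) (ξ (j + 1)), bspline ξ i p x = q.eval x := by
  have mono : Monotone ξ := monotone_nat_of_le_succ hξ
  induction p generalizing i with
  | zero =>
    by_cases h : i = j
    · subst h
      refine ⟨1, by simp, fun x hx => ?_⟩
      simp [bspline, hx.1, hx.2]
    · refine ⟨0, by simp, fun x hx => ?_⟩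
      rcases lt_or_gt_of_ne h with hij | hij
      · have h1 : ξ (i + 1) ≤ ξ j := mono (by omega)
        simp only [bspline, Polynomial.eval_zero, ite_eq_right_iff, one_ne_zero]
        rintro ⟨-, h2⟩
        linarith [hx.1]
      · have h1 : ξ (j + 1) ≤ ξ i := mono (by omega)
        simp only [bspline, Polynomial.eval_zero, ite_eq_right_iff, one_ne_zero]
        rintro ⟨h2, -⟩
        linarith [hx.2]
  | succ p ih =>
    obtain ⟨q1, hq1d, hq1⟩ := ih i
    obtain ⟨q2, hq2d, hq2⟩ := ih (i + 1)
    refine ⟨(if ξ (i + p + 1) - ξ i = 0 then 0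
        else Polynomial.C (ξ (i + p + 1) - ξ i)⁻¹ * (Polynomial.X - Polynomial.C (ξ i)) * q1) +
      (if ξ (i + p + 2) - ξ (i + 1) = 0 then 0
        else Polynomial.C (ξ (i + p + 2) - ξ (i + 1))⁻¹ *
          (Polynomial.C (ξ (i + p + 2)) - Polynomial.X) * q2), ?_, ?_⟩
    · apply le_trans (Polynomial.degree_add_le _ _)
      have key : ∀ (a b : ℝ) (q : Polynomial ℝ), q.degree ≤ p →
          (Polynomial.C a * (Polynomial.X - Polynomial.C b) * q).degree ≤ ((p + 1 : ℕ) : WithBot ℕ) := by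
        intro a b q hq
        apply le_trans (Polynomial.degree_mul_le _ _)
        have h1 : (Polynomial.C a * (Polynomial.X - Polynomial.C b)).degree ≤ 1 := by
          apply le_trans (Polynomial.degree_mul_le _ _)
          have := Polynomial.degree_C_le (a := a)
          have h2 : (Polynomial.X - Polynomial.C b).degree ≤ 1 :=
            le_of_eq (Polynomial.degree_X_sub_C b)
          calc (Polynomial.C a).degree + (Polynomial.X - Polynomial.C b).degree
              ≤ 0 + 1 := add_le_add this h2
            _ = 1 := by simp
        calc (Polynomial.C a * (Polynomial.X - Polynomial.C b)).degree + q.degree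
            ≤ 1 + (p : ℕ) := add_le_add h1 hq
          _ = ((p + 1 : ℕ) : WithBot ℕ) := by
            push_cast; rw [add_comm]
      have h1 : ∀ a b (q : Polynomial ℝ), q.degree ≤ p →
          (if (a : ℝ) = 0 then (0 : Polynomial ℝ)
            else Polynomial.C a⁻¹ * (Polynomial.X - Polynomial.C b) * q).degree ≤ ((p + 1 : ℕ) : WithBot ℕ) := by
        intro a b q hq
        split_ifs
        · simp
        · exact key _ _ _ hq
      have hb1 := h1 (ξ (i + p + 1) - ξ i) (ξ i) q1 hq1d
      have hb2' : ∀ a b (q : Polynomial ℝ), q.degree ≤ p →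
          (if (a : ℝ) = 0 then (0 : Polynomial ℝ)
            else Polynomial.C a⁻¹ * (Polynomial.C b - Polynomial.X) * q).degree ≤ ((p + 1 : ℕ) : WithBot ℕ) := by
        intro a b q hq
        split_ifs
        · simp
        · have : Polynomial.C a⁻¹ * (Polynomial.C b - Polynomial.X) * q
              = Polynomial.C (-a⁻¹) * (Polynomial.X - Polynomial.C b) * q := by
            rw [map_neg]; ring
          rw [this]
          exact key _ _ _ hq
      have hb2 := hb2' (ξ (i + p + 2) - ξ (i + 1)) (ξ (i + p + 2)) q2 hq2d
      calc _ ≤ max ((p + 1 : ℕ) : WithBot ℕ) ((p + 1 : ℕ) : WithBot ℕ) := max_le_max hb1 hb2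
        _ = ((p + 1 : ℕ) : WithBot ℕ) := max_self _
      -- done
    · intro x hx
      simp only [bspline, Polynomial.eval_add]
      congr 1
      · split_ifs with h
        · simp
        · rw [hq1 x hx]
          simp only [Polynomial.eval_mul, Polynomial.eval_C, Polynomial.eval_sub,
            Polynomial.eval_X]
          field_simp
      · split_ifs with h
        · simp
        · rw [hq2 x hx]
          simp only [Polynomial.eval_mul, Polynomial.eval_C, Polynomial.eval_sub,
            Polynomial.eval_X]
          field_simp
end

section
/- Interpolatory property at a knot of multiplicity p: let ξ be a knot vector, p ≥ 1, i an index, and t a real number such that ξ (i+1) = ξ (i+2) = ⋯ = ξ (i+p) = t and ξ i < t < ξ (i+p+1). Then N i p t = 1 (so the B-spline basis is interpolatory at a knot of multiplicity exactly p). -/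
/-- If all knots `ξ (i+1), …, ξ (i+p+1)` equal `t`, then `N_{i,p}(t) = 0`. -/
lemma bspline_eq_zero_of_knots_eq (ξ : ℕ → ℝ) :
    ∀ p i (t : ℝ), (∀ k, k ≤ p → ξ (i + 1 + k) = t) → bspline ξ i p t = 0 := by
  intro p
  induction p with
  | zero =>
    intro i t h
    have h0 : ξ (i + 1) = t := by simpa using h 0 le_rfl
    simp [bspline, h0]
  | succ q ih =>
    intro i t h
    have h0 : ξ (i + 1) = t := by simpa using h 0 (Nat.zero_le _)
    have h1 : ξ (i + q + 2) = t := by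
      have := h (q + 1) le_rfl
      simpa [show i + 1 + (q + 1) = i + q + 2 from by omega] using this
    have hz : bspline ξ i q t = 0 := ih i t fun k hk => h k (le_trans hk (Nat.le_succ _))
    simp [bspline, h0, h1, hz]

/-- If `ξ i = ξ (i+1) = ⋯ = ξ (i+p) = t < ξ (i+p+1)`, then `N_{i,p}(t) = 1`. -/
lemma bspline_eq_one_of_left_knots_eq (ξ : ℕ → ℝ) :
    ∀ p i (t : ℝ), (∀ k, k ≤ p → ξ (i + k) = t) → t < ξ (i + p + 1) →
      bspline ξ i p t = 1 := by
  intro p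
  induction p with
  | zero =>
    intro i t h hlt
    have h0 : ξ i = t := by simpa using h 0 le_rfl
    simp only [Nat.add_zero] at hlt
    simp [bspline, h0, le_refl, hlt]
  | succ q ih =>
    intro i t h hlt
    have h0 : ξ i = t := by simpa using h 0 (Nat.zero_le _)
    have h1 : ξ (i + q + 1) = t := by
      have := h (q + 1) le_rfl
      simpa [show i + (q + 1) = i + q + 1 from by omega] using this
    have hlt' : t < ξ (i + q + 2) := by
      simpa [show i + (q + 1) + 1 = i + q + 2 from by omega] using hlt
    have hone : bspline ξ (i + 1) q t = 1 := by
      apply ih (i + 1) t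
      · intro k hk
        have := h (k + 1) (by omega)
        simpa [show i + (k + 1) = i + 1 + k from by omega] using this
      · simpa [show i + 1 + q + 1 = i + q + 2 from by omega] using hlt'
    have hne : ξ (i + q + 2) - ξ (i + 1) ≠ 0 := by
      have h2 : ξ (i + 1) = t := by simpa using h 1 (by omega)
      rw [h2]; linarith
    have h2 : ξ (i + 1) = t := by simpa using h 1 (by omega)
    rw [bspline]
    rw [if_pos (by rw [h1, h0]; ring), if_neg hne, h2, hone, mul_one,
      div_self (by rw [h2] at hne; exact hne)]
    ring

/-- Interpolatory property at a knot of multiplicity `p`: if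
`ξ (i+1) = ⋯ = ξ (i+p) = t` and `ξ i < t < ξ (i+p+1)`, then `N_{i,p}(t) = 1`. -/
theorem bspline_interpolatory_at_multiple_knot (ξ : ℕ → ℝ)
    (hξ : ∀ i, ξ i ≤ ξ (i + 1)) (p : ℕ) (hp : 1 ≤ p) (i : ℕ) (t : ℝ)
    (hmult : ∀ m, 1 ≤ m → m ≤ p → ξ (i + m) = t)
    (hlt : ξ i < t) (hgt : t < ξ (i + p + 1)) :
    bspline ξ i p t = 1 := by
  obtain ⟨q, rfl⟩ : ∃ q, p = q + 1 := ⟨p - 1, by omega⟩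
  have h1 : ξ (i + 1) = t := hmult 1 le_rfl (by omega)
  have hq1 : ξ (i + q + 1) = t := by
    have := hmult (q + 1) (by omega) le_rfl
    simpa [show i + (q + 1) = i + q + 1 from by omega] using this
  have hgt' : t < ξ (i + q + 2) := by
    simpa [show i + (q + 1) + 1 = i + q + 2 from by omega] using hgt
  have hz : bspline ξ i q t = 0 := by
    apply bspline_eq_zero_of_knots_eq
    intro k hk
    have := hmult (k + 1) (by omega) (by omega)
    simpa [show i + (k + 1) = i + 1 + k from by omega] using this
  have hone : bspline ξ (i + 1) q t = 1 := by
    apply bspline_eq_one_of_left_knots_eq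
    · intro k hk
      have := hmult (k + 1) (by omega) (by omega)
      simpa [show i + (k + 1) = i + 1 + k from by omega] using this
    · simpa [show i + 1 + q + 1 = i + q + 2 from by omega] using hgt'
  rw [bspline, hz, hone, mul_zero, mul_one, h1]
  rw [if_neg (by rw [hq1]; intro hc; linarith), zero_add]
  rw [if_neg (by intro hc; linarith), div_self (by intro hc; linarith)]
end

section
/- Endpoint interpolation for an open knot vector: let ξ be a knot vector, p a degree, and a a real number such that ξ 0 = ξ 1 = ⋯ = ξ p = a < ξ (p+1) (the first knot has multiplicity p + 1). Then N 0 p a = 1 and N i p a = 0 for every index i ≥ 1; consequently an open B-spline curve C(u) = ∑_i N i p (u) • P_i with control points P_i in ℝ^d satisfies C(a) = P_0, i.e. the curve starts at its first control point. -/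
/-- Endpoint interpolation for an open knot vector: if `ξ 0 = ⋯ = ξ p = a < ξ (p+1)`,
then `N_{0,p}(a) = 1`, `N_{i,p}(a) = 0` for all `i ≥ 1`, and consequently every
B-spline curve `C(u) = ∑ i, N_{i,p}(u) • P i` with control points in `ℝ^d`
starts at its first control point: `C(a) = P 0`. -/
theorem bspline_open_knot_endpoint (ξ : ℕ → ℝ) (hξ : ∀ i, ξ i ≤ ξ (i + 1))
    (p : ℕ) (a : ℝ) (hopen : ∀ m ≤ p, ξ m = a) (ha : a < ξ (p + 1)) :
    bspline ξ 0 p a = 1 ∧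
    (∀ i, 1 ≤ i → bspline ξ i p a = 0) ∧
    (∀ (d : ℕ) (P : ℕ → EuclideanSpace ℝ (Fin d)) (n : ℕ), 1 ≤ n →
      ∑ i ∈ Finset.range n, bspline ξ i p a • P i = P 0) := by
  have hmono : Monotone ξ := monotone_nat_of_le_succ hξ
  have key : ∀ q, q ≤ p → ∀ i, bspline ξ i q a = if i + q = p then 1 else 0 := by
    intro q
    induction q with
    | zero =>
      intro _ i
      simp only [bspline, Nat.add_zero]
      rcases lt_trichotomy i p with h | h | h
      · rw [if_neg, if_neg (by omega)]
        rintro ⟨_, h2⟩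
        rw [hopen (i + 1) (by omega)] at h2
        exact lt_irrefl a h2
      · subst h
        rw [if_pos ⟨le_of_eq (hopen i le_rfl), ha⟩, if_pos rfl]
      · rw [if_neg, if_neg (by omega)]
        rintro ⟨h1, _⟩
        have : ξ (p + 1) ≤ ξ i := hmono h
        linarith
    | succ q ih =>
      intro hq i
      have IH := ih (by omega)
      simp only [bspline]
      by_cases hcase : i + q + 1 = p
      · -- left term vanishes, right term is 1
        rw [IH i, IH (i + 1), if_neg (by omega : ¬ i + q = p),
          if_pos (by omega : i + 1 + q = p), if_pos (by omega : i + (q + 1) = p)]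
        have e1 : i + q + 2 = p + 1 := by omega
        have e2 : ξ (i + 1) = a := hopen _ (by omega)
        rw [e1, e2]
        have hd : ξ (p + 1) - a ≠ 0 := by linarith
        rw [if_neg hd, div_self hd]
        simp
      · rw [IH i, IH (i + 1), if_neg (by omega : ¬ i + (q + 1) = p)]
        by_cases h2 : i + q = p
        · -- left coefficient's numerator a - ξ i = 0
          have hi : ξ i = a := hopen _ (by omega)
          rw [if_pos h2, if_neg (by omega : ¬ i + 1 + q = p), hi]
          simp
        · rw [if_neg h2, if_neg (by omega : ¬ i + 1 + q = p)]
          simp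
  have h1 : bspline ξ 0 p a = 1 := by
    have := key p le_rfl 0
    simpa using this
  have h2 : ∀ i, 1 ≤ i → bspline ξ i p a = 0 := by
    intro i hi
    have := key p le_rfl i
    rw [this, if_neg (by omega)]
  refine ⟨h1, h2, ?_⟩
  intro d P n hn
  rw [Finset.sum_eq_single_of_mem 0 (Finset.mem_range.mpr hn)
    (fun i _ hi => by rw [h2 i (by omega)]; simp), h1, one_smul]
end
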